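/- The number of partitions μ in Q₋₁ whose first part satisfies μ₁ ≤ n is exactly 2^n. -/

import Mathlib

/-- A partition, encoded as a weakly decreasing list of positive integers. -/
def IsPartitionL (l : List ℕ) : Prop :=
  l.Pairwise (· ≥ ·) ∧ ∀ x ∈ l, 0 < x

/-- Delete the first row and the first column of a partition:
`(μ₁, μ₂, …) ↦ (μ₂ − 1, μ₃ − 1, …)`, dropping the resulting zero parts. -/
def delRowCol (l : List ℕ) : List ℕ :=
  ((l.tail).map (· - 1)).filter (· ≠ 0)

/-- The set `Q₋₁` of partitions: the empty partition is in `Q₋₁`, and a nonempty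
partition `μ` is in `Q₋₁` iff `ℓ(μ) = μ₁ + 1` and the partition obtained by deleting
the first row and column of `μ` is in `Q₋₁`. -/
inductive Qneg : List ℕ → Prop
  | nil : Qneg []
  | cons {l : List ℕ} (hne : l ≠ []) (hlen : l.length = l.headI + 1)
      (h : Qneg (delRowCol l)) : Qneg l

/-- extend: prepend first row `m` and first column. -/
def extP (m : ℕ) (ν : List ℕ) : List ℕ :=
  m :: (ν.map (· + 1) ++ List.replicate (m - ν.length) 1)

def Sset (n : ℕ) : Set (List ℕ) := {l | IsPartitionL l ∧ Qneg l ∧ l.headI ≤ n}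

lemma delRowCol_extP (m : ℕ) (ν : List ℕ) (hpos : ∀ x ∈ ν, 0 < x) :
    delRowCol (extP m ν) = ν := by
  unfold delRowCol extP
  simp only [List.tail_cons, List.map_append, List.map_map, List.filter_append]
  have h1 : (ν.map ((· - 1) ∘ (· + 1))) = ν := by
    have : ((· - 1) ∘ (· + 1) : ℕ → ℕ) = id := by
      funext x; simp
    rw [this, List.map_id]
  rw [h1]
  have h2 : ((List.replicate (m - ν.length) 1).map (· - 1)) = List.replicate (m - ν.length) 0 := by
    simp
  rw [h2]
  have h3 : (List.replicate (m - ν.length) 0).filter (· ≠ 0) = [] := by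
    simp [List.filter_eq_nil_iff]
  rw [h3, List.append_nil]
  rw [List.filter_eq_self]
  intro a ha
  simpa using (hpos a ha).ne'

lemma headI_le_of_sorted {l : List ℕ} (h : l.Pairwise (· ≥ ·)) {x : ℕ} (hx : x ∈ l) :
    x ≤ l.headI := by
  cases l with
  | nil => simp at hx
  | cons a t =>
    rcases List.mem_cons.1 hx with hx | hx
    · simp [hx]
    · exact List.rel_of_pairwise_cons h hx

lemma Qneg.length_le {ν : List ℕ} (h : Qneg ν) : ν.length ≤ ν.headI + 1 := by
  cases h with
  | nil => simp
  | cons hne hlen h => exact hlen.le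

lemma extP_mem {n : ℕ} {ν : List ℕ} (hν : ν ∈ Sset n) :
    extP (n+1) ν ∈ Sset (n+1) ∧ (extP (n+1) ν).headI = n + 1 := by
  obtain ⟨⟨hsort, hpos⟩, hQ, hhead⟩ := hν
  have hlenν : ν.length ≤ n + 1 := le_trans hQ.length_le (by omega)
  have hmem : ∀ x ∈ ν.map (· + 1) ++ List.replicate (n + 1 - ν.length) 1,
      1 ≤ x ∧ x ≤ n + 1 := by
    intro x hx
    rcases List.mem_append.1 hx with hx | hx
    · obtain ⟨y, hy, rfl⟩ := List.mem_map.1 hx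
      have := headI_le_of_sorted hsort hy
      constructor
      · omega
      · have : ν.headI ≤ n := hhead
        omega
    · have := List.eq_of_mem_replicate hx
      omega
  have hsort' : (extP (n+1) ν).Pairwise (· ≥ ·) := by
    unfold extP
    refine List.pairwise_cons.2 ⟨fun b hb => (hmem b hb).2, ?_⟩
    rw [List.pairwise_append]
    refine ⟨List.Pairwise.map _ (fun a b h => by omega) hsort, ?_, ?_⟩
    · exact List.pairwise_replicate.2 (Or.inr le_rfl)
    · intro x hx y hy
      have := List.eq_of_mem_replicate hy
      obtain ⟨z, hz, rfl⟩ := List.mem_map.1 hx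
      omega
  have hdel : delRowCol (extP (n+1) ν) = ν := delRowCol_extP _ _ hpos
  have hlen : (extP (n+1) ν).length = (extP (n+1) ν).headI + 1 := by
    unfold extP
    simp [List.length_append, List.length_replicate]
    omega
  refine ⟨⟨⟨hsort', ?_⟩, ?_, ?_⟩, rfl⟩
  · intro x hx
    rcases List.mem_cons.1 hx with rfl | hx
    · omega
    · exact (hmem x hx).1
  · exact Qneg.cons (by simp [extP]) hlen (by rwa [hdel])
  · simp [extP]

lemma filter_append_replicate_zero {l : List ℕ} (h : l.Pairwise (· ≥ ·)) :
    l.filter (· ≠ 0) ++ List.replicate (l.length - (l.filter (· ≠ 0)).length) 0 = l := by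
  induction l with
  | nil => simp
  | cons a t ih =>
    rw [List.pairwise_cons] at h
    by_cases ha : a = 0
    · subst ha
      have hall : ∀ x ∈ (0 : ℕ) :: t, x = 0 := by
        intro x hx
        rcases List.mem_cons.1 hx with rfl | hx
        · rfl
        · exact Nat.le_zero.1 (h.1 x hx)
      have hf : ((0 : ℕ) :: t).filter (· ≠ 0) = [] := by
        rw [List.filter_eq_nil_iff]
        intro x hx
        simp [hall x hx]
      rw [hf]
      simp only [List.nil_append, List.length_nil, Nat.sub_zero]
      exact (List.eq_replicate_iff.2 ⟨rfl, hall⟩).symm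
    · have hf : ((a : ℕ) :: t).filter (· ≠ 0) = a :: t.filter (· ≠ 0) := by
        rw [List.filter_cons_of_pos (by simpa using ha)]
      rw [hf]
      have hle : (t.filter (· ≠ 0)).length ≤ t.length := List.length_filter_le _ _
      simp only [List.cons_append, List.length_cons]
      rw [show t.length + 1 - ((t.filter (· ≠ 0)).length + 1) =
        t.length - (t.filter (· ≠ 0)).length by omega]
      rw [ih h.2]

lemma mem_decomp {n : ℕ} {μ : List ℕ} (hμ : μ ∈ Sset (n+1)) (hh : μ.headI = n+1) :
    delRowCol μ ∈ Sset n ∧ μ = extP (n+1) (delRowCol μ) := by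
  obtain ⟨⟨hsort, hpos⟩, hQ, _⟩ := hμ
  cases hQ with
  | nil => simp at hh
  | @cons l hne hlen hQd =>
    obtain ⟨m, t, rfl⟩ : ∃ m t, μ = m :: t := by
      cases μ with
      | nil => exact absurd rfl hne
      | cons a t => exact ⟨a, t, rfl⟩
    simp only [List.headI_cons] at hh
    subst hh
    simp only [List.length_cons, List.headI_cons] at hlen
    have htlen : t.length = n + 1 := by omega
    rw [List.pairwise_cons] at hsort
    have htle : ∀ x ∈ t, x ≤ n + 1 := hsort.1
    have htpos : ∀ x ∈ t, 0 < x := fun x hx => hpos x (List.mem_cons_of_mem _ hx)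
    set L := t.map (· - 1) with hL
    have hLsort : L.Pairwise (· ≥ ·) := List.Pairwise.map _ (fun a b h => by omega) hsort.2
    have hdel : delRowCol ((n+1) :: t) = L.filter (· ≠ 0) := rfl
    set ν := L.filter (· ≠ 0) with hν
    have hνsub : ∀ x ∈ ν, x ∈ L := fun x hx => (List.mem_filter.1 hx).1
    have hνpos : ∀ x ∈ ν, 0 < x := by
      intro x hx
      have := (List.mem_filter.1 hx).2
      simp at this
      omega
    have hνsort : ν.Pairwise (· ≥ ·) := List.Pairwise.sublist List.filter_sublist hLsort
    have hνle : ν.headI ≤ n := by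
      cases hνnil : ν with
      | nil => simp
      | cons a s =>
        have : a ∈ L := hνsub a (by rw [hνnil]; exact List.mem_cons_self)
        obtain ⟨y, hy, rfl⟩ := List.mem_map.1 this
        have := htle y hy
        simp only [List.headI_cons]
        omega
    have hkey : ν ++ List.replicate (L.length - ν.length) 0 = L :=
      filter_append_replicate_zero hLsort
    have hrec : t = ν.map (· + 1) ++ List.replicate (n + 1 - ν.length) 1 := by
      have h1 : L.map (· + 1) = t := by
        rw [hL, List.map_map]
        have : ∀ x ∈ t, ((· + 1) ∘ (· - 1)) x = id x := by
          intro x hx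
          have := htpos x hx
          simp only [Function.comp, id]
          omega
        rw [List.map_congr_left this, List.map_id]
      have h2 : L.length = n + 1 := by rw [hL, List.length_map, htlen]
      calc t = L.map (· + 1) := h1.symm
        _ = (ν ++ List.replicate (L.length - ν.length) 0).map (· + 1) := by rw [hkey]
        _ = ν.map (· + 1) ++ List.replicate (n + 1 - ν.length) 1 := by
            rw [List.map_append, List.map_replicate, h2]
    refine ⟨⟨⟨hνsort, hνpos⟩, ?_, hνle⟩, ?_⟩
    · rw [hdel] at hQd; exact hQd
    · rw [extP]
      have hνlen : ν.length ≤ n + 1 := by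
        have := congrArg List.length hrec
        simp only [List.length_append, List.length_map, List.length_replicate] at this
        omega
      rw [hdel, ← hrec]

lemma Sset_zero : Sset 0 = {[]} := by
  ext l
  constructor
  · rintro ⟨⟨hs, hp⟩, hQ, hh⟩
    cases l with
    | nil => rfl
    | cons a t =>
      have := hp a (List.mem_cons_self)
      simp only [List.headI_cons] at hh
      omega
  · rintro rfl
    exact ⟨⟨List.Pairwise.nil, by simp⟩, Qneg.nil, by simp⟩

lemma Sset_succ (n : ℕ) : Sset (n+1) = Sset n ∪ extP (n+1) '' Sset n := by
  ext μ
  constructor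
  · intro hμ
    by_cases hh : μ.headI ≤ n
    · exact Or.inl ⟨hμ.1, hμ.2.1, hh⟩
    · have hh' : μ.headI = n + 1 := le_antisymm hμ.2.2 (by omega)
      obtain ⟨h1, h2⟩ := mem_decomp hμ hh'
      exact Or.inr ⟨_, h1, h2.symm⟩
  · rintro (hμ | ⟨ν, hν, rfl⟩)
    · exact ⟨hμ.1, hμ.2.1, le_trans hμ.2.2 (Nat.le_succ n)⟩
    · exact (extP_mem hν).1

lemma Sset_finite (n : ℕ) : (Sset n).Finite := by
  induction n with
  | zero => rw [Sset_zero]; exact Set.finite_singleton _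
  | succ n ih => rw [Sset_succ]; exact ih.union (ih.image _)

/-- The number of partitions `μ ∈ Q₋₁` with first part `μ₁ ≤ n` is exactly `2 ^ n`. -/
theorem numQneg_firstPart_le (n : ℕ) :
    {l : List ℕ | IsPartitionL l ∧ Qneg l ∧ l.headI ≤ n}.ncard = 2 ^ n := by
  show (Sset n).ncard = 2 ^ n
  induction n with
  | zero => rw [Sset_zero]; simp
  | succ n ih =>
    rw [Sset_succ]
    have hdisj : Disjoint (Sset n) (extP (n+1) '' Sset n) := by
      rw [Set.disjoint_left]
      rintro μ hμ ⟨ν, hν, rfl⟩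
      have h1 := (extP_mem hν).2
      have h2 := hμ.2.2
      omega
    rw [Set.ncard_union_eq hdisj (Sset_finite n) ((Sset_finite n).image _)]
    have hinj : Set.InjOn (extP (n+1)) (Sset n) := by
      intro a ha b hb hab
      have := congrArg delRowCol hab
      rwa [delRowCol_extP _ _ ha.1.2, delRowCol_extP _ _ hb.1.2] at this
    rw [Set.ncard_image_of_injOn hinj, ih]
    ring
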